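/- Let G be a finite group, S ∈ Syl_p(G), and let P ≤ R ≤ S with C_G(P) of characteristic p. Then C_G(R) is of characteristic p. Consequently, the set Δ = {P ≤ S : N_G(P) is of characteristic p} is closed under passing to overgroups in S and under G-conjugation. -/

import Mathlib

/-!
For a `p`-subgroup `R`, `C_G(R)` is of characteristic `p` iff `N_G(R)` is: `R` and
`O_p(C_G(R))` both lie in `O_p(N_G(R))`, so a `p'`-element centralizing `O_p(N_G(R))` lies in
`O_p(C_G(R))`. Two closure properties drive the passage to overgroups. If `H` is of characteristic
`p` and the `p`-group `R` normalizes `H`, then so is `HR`, because the `p'`-elements of `HR` lie in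
`H`. If `K` is of characteristic `p` and `R ≤ K` is a `p`-group, then so is `C_K(R)`: a
`p'`-element of `C_K(R)` centralizing `O_p(C_K(R)) ≥ C_{O_p(K)}(R)` centralizes `O_p(K)` by
Thompson's `A × B` lemma, applied to the nilpotent group `O_p(K) R`. Hence if `P ⊴ R` then
`C_G(R) = C_{C_G(P) R}(R)` inherits characteristic `p` from `C_G(P)`, and since `P` is subnormal in
the `p`-group `R`, the chain `P < N_R(P) < ⋯` reaches `R`. Conjugation invariance is transport of
structure along `N_G(P) ≃ N_G(P^g)`.
-/

variable (p : ℕ) (G : Type*) [Group G]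

/-- `O_p(G)`: the join of all normal `p`-subgroups of `G` (the largest normal `p`-subgroup
when `G` is finite). -/
def pCore : Subgroup G :=
  ⨆ H : {H : Subgroup G // H.Normal ∧ IsPGroup p H}, H.1

/-- `O_{p'}(G)`: the join of all normal subgroups of order coprime to `p` (the largest normal
`p'`-subgroup when `G` is finite). -/
def pPrimeCore : Subgroup G :=
  ⨆ H : {H : Subgroup G // H.Normal ∧ Nat.Coprime (Nat.card H) p}, H.1

lemma iSup_normal {G : Type*} [Group G] {ι : Sort*} (H : ι → Subgroup G)
    (h : ∀ i, (H i).Normal) : (⨆ i, H i).Normal := by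
  constructor
  intro n hn g
  refine Subgroup.iSup_induction (C := fun x => g * x * g⁻¹ ∈ ⨆ i, H i) H hn
    (fun i x hx => ?_) ?_ (fun x y hx hy => ?_)
  · exact Subgroup.mem_iSup_of_mem i ((h i).conj_mem x hx g)
  · simpa using Subgroup.one_mem (⨆ i, H i)
  · have e : g * (x * y) * g⁻¹ = (g * x * g⁻¹) * (g * y * g⁻¹) := by group
    show g * (x * y) * g⁻¹ ∈ ⨆ i, H i
    rw [e]; exact mul_mem hx hy

instance pCore_normal : (pCore p G).Normal := iSup_normal _ (fun i => i.2.1)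

instance pPrimeCore_normal : (pPrimeCore p G).Normal := iSup_normal _ (fun i => i.2.1)

/-- A group `G` is of characteristic `p` if `C_G(O_p(G)) ≤ O_p(G)`. -/
def IsCharP : Prop :=
  Subgroup.centralizer ((pCore p G : Subgroup G) : Set G) ≤ pCore p G

/-- A group `G` is almost of characteristic `p` if `G/O_{p'}(G)` is of characteristic `p`. -/
def IsAlmostCharP : Prop := IsCharP p (G ⧸ pPrimeCore p G)

section

open Subgroup
open scoped Pointwise commutatorElement

variable {p G} {G' : Type*} [Group G']

lemma normalizer_le_normalizer_centralizer (H : Subgroup G) :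
    normalizer (H : Set G) ≤ normalizer (centralizer (H : Set G) : Set G) :=
  (normal_subgroupOf_iff_le_normalizer (centralizer_le_normalizer _)).mp inferInstance

lemma map_subtype_centralizer (K : Subgroup G) (X : Subgroup K) :
    (centralizer (X : Set K)).map K.subtype = centralizer (X.map K.subtype : Set G) ⊓ K := by
  ext g
  simp only [mem_map, mem_inf, mem_centralizer_iff]
  constructor
  · rintro ⟨y, hy, rfl⟩
    exact ⟨fun _ ⟨z, hz, hzy⟩ => hzy ▸ congrArg Subtype.val (hy z hz), y.2⟩
  · rintro ⟨hc, hgK⟩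
    exact ⟨⟨g, hgK⟩, fun z hz => Subtype.ext (hc z ⟨z, hz, rfl⟩), rfl⟩

lemma mul_pow_mul_inv_pow_mem {H : Subgroup G} {h r : G} (hh : h ∈ H)
    (hr : r ∈ normalizer (H : Set G)) (n : ℕ) : (h * r) ^ n * (r ^ n)⁻¹ ∈ H := by
  induction n with
  | zero => simp
  | succ n ih =>
    have e : (h * r) ^ (n + 1) * (r ^ (n + 1))⁻¹ =
        (h * r) ^ n * (r ^ n)⁻¹ * (r ^ n * h * (r ^ n)⁻¹) := by
      rw [pow_succ, pow_succ]; group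
    rw [e]
    exact mul_mem ih ((mem_normalizer_iff.mp (pow_mem hr n) h).mp hh)

lemma commutatorElement_eq_one_of_commute {x t : G} (h : Commute x ⁅x, t⁆)
    (hco : (orderOf ⁅x, t⁆).Coprime (orderOf x)) : ⁅x, t⁆ = 1 := by
  set c := ⁅x, t⁆
  have hxt : x * t = c * t * x := by simp [c, commutatorElement_def, mul_assoc]
  have hpow : ∀ n : ℕ, x ^ n * t = c ^ n * t * x ^ n := by
    intro n
    induction n with
    | zero => simp
    | succ n ih =>
      calc x ^ (n + 1) * t = x * c ^ n * t * x ^ n := by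
            rw [pow_succ', mul_assoc, ih]; simp only [mul_assoc]
        _ = c ^ n * (x * t) * x ^ n := by rw [(h.pow_right n).eq, mul_assoc (c ^ n)]
        _ = c ^ (n + 1) * t * x ^ (n + 1) := by
            rw [hxt, pow_succ, pow_succ']; simp only [mul_assoc]
  have hc : c ^ orderOf x = 1 := by
    simpa [pow_orderOf_eq_one] using (hpow (orderOf x)).symm
  exact orderOf_eq_one_iff.mp (hco.eq_one_of_dvd (orderOf_dvd_of_pow_eq_one hc))

lemma IsPGroup.coprime_orderOf_of_mem {T : Subgroup G} (hT : IsPGroup p T) {x y : G}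
    (hy : y ∈ T) (hx : (orderOf x).Coprime p) : (orderOf y).Coprime (orderOf x) := by
  simpa using hT.orderOf_coprime hx.symm ⟨y, hy⟩

lemma IsPGroup.eq_one_of_mem_of_coprime {T : Subgroup G} (hT : IsPGroup p T) {x : G}
    (hxT : x ∈ T) (hx : (orderOf x).Coprime p) : x = 1 := by
  simpa using hT.coprime_orderOf_of_mem hxT hx

lemma isPGroup_of_forall_coprime [Finite G] [Fact p.Prime]
    (h : ∀ x : G, (orderOf x).Coprime p → x = 1) : IsPGroup p G := by
  rw [IsPGroup.iff_card]
  refine ⟨_, Nat.eq_prime_pow_of_unique_prime_dvd Nat.card_pos.ne' fun {q} hq hqG => ?_⟩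
  have := Fact.mk hq
  obtain ⟨x, hx⟩ := exists_prime_orderOf_dvd_card' q hqG
  by_contra hne
  have hx1 := h x (hx ▸ (Nat.coprime_primes hq Fact.out).mpr hne)
  rw [hx1, orderOf_one] at hx
  exact hq.one_lt.ne hx

lemma mem_of_mem_sup_of_coprime {H R : Subgroup G} (hR : IsPGroup p R)
    (hRH : R ≤ normalizer (H : Set G)) {x : G} (hx : x ∈ H ⊔ R) (hxp : (orderOf x).Coprime p) :
    x ∈ H := by
  obtain ⟨h, hh, r, hr, rfl⟩ : x ∈ (H : Set G) * R := by
    rwa [← coe_mul_of_right_le_normalizer_left H R hRH]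
  obtain ⟨a, ha⟩ := hR ⟨r, hr⟩
  have hpow : (h * r) ^ p ^ a ∈ H := by
    simpa [show r ^ p ^ a = 1 by simpa [Subtype.ext_iff] using ha] using
      mul_pow_mul_inv_pow_mem hh (hRH hr) (p ^ a)
  obtain ⟨m, hm⟩ := exists_pow_eq_self_of_coprime (hxp.pow_right a).symm
  exact hm ▸ pow_mem hpow m

lemma lt_normalizer_inf_of_lt [Finite G] [Fact p.Prime] {P R : Subgroup G} (hPR : P < R)
    (hR : IsPGroup p R) : P < normalizer (P : Set G) ⊓ R := by
  have := hR.isNilpotent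
  have hlt : P.subgroupOf R < normalizer (P.subgroupOf R : Set R) :=
    Group.normalizerCondition_of_isNilpotent _
      (lt_top_iff_ne_top.mpr (mt subgroupOf_eq_top.mp (not_le_of_gt hPR)))
  rw [← subgroupOf_normalizer_eq hPR.le] at hlt
  simpa [subgroupOf_map_subtype, inf_eq_left.mpr hPR.le] using
    (map_lt_map_iff_of_injective R.subtype_injective).mpr hlt

section CoprimeAction

variable {T R : Subgroup G} {x : G}

/-- By the three subgroups lemma `⁅x, t⁆` centralizes `R`, so it lies in `C_T(R)` and commutes
with `x`. -/
lemma mem_centralizer_of_mem_centralizer_commutator (hT : IsPGroup p T)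
    (hxT : x ∈ normalizer (T : Set G)) (hxR : x ∈ centralizer (R : Set G))
    (hxTR : x ∈ centralizer ((T ⊓ centralizer (R : Set G) : Subgroup G) : Set G))
    (hxp : (orderOf x).Coprime p) {A : Subgroup G} (hAT : A ≤ T)
    (hxAR : x ∈ centralizer ((⁅A, R⁆ : Subgroup G) : Set G)) : x ∈ centralizer (A : Set G) := by
  have hRx : ⁅R, zpowers x⁆ = ⊥ := by
    rwa [commutator_eq_bot_iff_le_centralizer, le_centralizer_iff, zpowers_le]
  have hxAR' : ⁅⁅zpowers x, A⁆, R⁆ = ⊥ := by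
    refine commutator_commutator_eq_bot_of_rotate ?_ (by rw [hRx, commutator_bot_left])
    rwa [commutator_eq_bot_iff_le_centralizer, le_centralizer_iff, zpowers_le]
  refine mem_centralizer_iff.mpr fun t ht => ?_
  have hc : ⁅x, t⁆ ∈ T ⊓ centralizer (R : Set G) := by
    refine mem_inf.mpr ⟨?_, ?_⟩
    · exact mul_mem ((mem_normalizer_iff.mp hxT t).mp (hAT ht)) (inv_mem (hAT ht))
    · exact (commutator_eq_bot_iff_le_centralizer.mp hxAR')
        (commutator_mem_commutator (mem_zpowers x) ht)
  have hcomm : Commute x ⁅x, t⁆ := (mem_centralizer_iff.mp hxTR _ hc).symm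
  have := commutatorElement_eq_one_of_commute hcomm (hT.coprime_orderOf_of_mem hc.1 hxp)
  exact (commutatorElement_eq_one_iff_mul_comm.mp this).symm

/-- Thompson's `A × B` lemma for a single `p'`-element `x`. The iterated commutators
`⁅⋯⁅T, R⁆, ⋯, R⁆` reach `⊥` because `T ⊔ R` is a nilpotent `p`-group, and `x` centralizes each of
them by descending induction. -/
theorem mem_centralizer_of_mem_centralizer_inf_centralizer [Finite G] [Fact p.Prime]
    (hT : IsPGroup p T) (hR : IsPGroup p R) (hRT : R ≤ normalizer (T : Set G))
    (hxT : x ∈ normalizer (T : Set G)) (hxR : x ∈ centralizer (R : Set G))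
    (hxTR : x ∈ centralizer ((T ⊓ centralizer (R : Set G) : Subgroup G) : Set G))
    (hxp : (orderOf x).Coprime p) : x ∈ centralizer (T : Set G) := by
  set L := (T ⊔ R).lowerCentralSeries
  obtain ⟨n, hn⟩ := (isNilpotent_iff_lowerCentralSeries _).mp
    (hT.to_sup_of_normal_left' hR hRT).isNilpotent
  suffices key : ∀ j k, ∀ A ≤ T, A ≤ L k → L (k + j) = ⊥ → x ∈ centralizer (A : Set G) from
    key n 0 T le_rfl le_sup_left (by rwa [zero_add])
  intro j
  induction j with
  | zero =>
    intro k A _ hAk hk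
    rw [le_bot_iff.mp (hAk.trans hk.le)]
    simp [mem_centralizer_iff]
  | succ j ih =>
    intro k A hAT hAk hk
    have hART : ⁅A, R⁆ ≤ T :=
      (commutator_mono hAT le_rfl).trans (le_normalizer_iff_commutator_le_left.mp hRT)
    refine mem_centralizer_of_mem_centralizer_commutator hT hxT hxR hxTR hxp hAT
      (ih (k + 1) _ hART (commutator_mono hAk le_sup_right) ?_)
    rwa [add_assoc, add_comm 1 j]

end CoprimeAction

lemma le_pCore {H : Subgroup G} (hn : H.Normal) (hp : IsPGroup p H) : H ≤ pCore p G :=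
  le_iSup (fun H : {H : Subgroup G // H.Normal ∧ IsPGroup p H} => H.1) ⟨H, hn, hp⟩

lemma isPGroup_pCore : IsPGroup p (pCore p G) := by
  have hdir : Directed (· ≤ ·) (fun H : {H : Subgroup G // H.Normal ∧ IsPGroup p H} => H.1) :=
    fun ⟨A, _, hA⟩ ⟨B, _, hB⟩ =>
      ⟨⟨A ⊔ B, inferInstance, hA.to_sup_of_normal_right hB⟩, le_sup_left, le_sup_right⟩
  have : Nonempty {H : Subgroup G // H.Normal ∧ IsPGroup p H} := ⟨⟨⊥, inferInstance, .of_bot⟩⟩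
  rintro ⟨g, hg⟩
  obtain ⟨⟨H, _, hH⟩, hgH⟩ := (mem_iSup_of_directed hdir).mp hg
  obtain ⟨k, hk⟩ := hH ⟨g, hgH⟩
  exact ⟨k, by simpa [Subtype.ext_iff] using hk⟩

lemma map_pCore_le (f : G →* G') (hf : Function.Surjective f) :
    (pCore p G).map f ≤ pCore p G' :=
  le_pCore ((pCore_normal p G).map f hf) (isPGroup_pCore.map f)

lemma map_pCore (e : G ≃* G') : (pCore p G).map (e : G →* G') = pCore p G' := by
  refine le_antisymm (map_pCore_le _ e.surjective) ?_
  rw [map_equiv_eq_comap_symm, ← map_le_iff_le_comap]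
  exact map_pCore_le _ e.symm.surjective

lemma IsCharP.of_mulEquiv (e : G ≃* G') (h : IsCharP p G) : IsCharP p G' := by
  intro x hx
  rw [← map_pCore e] at hx ⊢
  refine ⟨e.symm x, h fun y hy => e.injective ?_, by simp⟩
  simpa using hx (e y) (mem_map_of_mem _ hy)

/-- `O_p(K)`, computed in `K` but viewed in `G`, so that centralizers and normalizers are taken in
`G`. -/
def pCoreOf (p : ℕ) (K : Subgroup G) : Subgroup G := (pCore p K).map K.subtype

lemma pCoreOf_le (K : Subgroup G) : pCoreOf p K ≤ K := map_subtype_le _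

lemma isPGroup_pCoreOf (K : Subgroup G) : IsPGroup p (pCoreOf p K) := isPGroup_pCore.map _

lemma le_pCoreOf {K T : Subgroup G} (hTK : T ≤ K) (hT : IsPGroup p T)
    (hKT : K ≤ normalizer (T : Set G)) : T ≤ pCoreOf p K := by
  have : (T.subgroupOf K).Normal := (normal_subgroupOf_iff_le_normalizer hTK).mpr hKT
  calc T = (T.subgroupOf K).map K.subtype := by rw [subgroupOf_map_subtype, inf_eq_left.mpr hTK]
    _ ≤ pCoreOf p K := map_mono (le_pCore this hT.comap_subtype)

lemma map_pCoreOf (e : G ≃* G') (K : Subgroup G) :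
    (pCoreOf p K).map (e : G →* G') = pCoreOf p (K.map (e : G →* G')) := by
  rw [pCoreOf, pCoreOf, ← map_pCore (e.subgroupMap K), map_map, map_map]
  rfl

lemma normalizer_le_normalizer_pCoreOf (K : Subgroup G) :
    normalizer (K : Set G) ≤ normalizer (pCoreOf p K : Set G) := fun g hg => by
  rw [mem_normalizer_iff_map_conj_eq] at hg ⊢
  rw [map_pCoreOf, hg]

lemma le_normalizer_pCoreOf (K : Subgroup G) : K ≤ normalizer (pCoreOf p K : Set G) :=
  le_normalizer.trans (normalizer_le_normalizer_pCoreOf K)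

lemma isCharP_iff (K : Subgroup G) :
    IsCharP p K ↔ centralizer (pCoreOf p K : Set G) ⊓ K ≤ pCoreOf p K := by
  rw [IsCharP, ← map_le_map_iff_of_injective K.subtype_injective, map_subtype_centralizer]
  rfl

lemma IsCharP.eq_one_of_coprime {K : Subgroup G} (hK : IsCharP p K) {x : G}
    (hxC : x ∈ centralizer (pCoreOf p K : Set G)) (hxK : x ∈ K) (hxp : (orderOf x).Coprime p) :
    x = 1 :=
  (isPGroup_pCoreOf K).eq_one_of_mem_of_coprime ((isCharP_iff K).mp hK ⟨hxC, hxK⟩) hxp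

section CharP

variable [Finite G] [Fact p.Prime]

lemma isCharP_of_forall_coprime {K : Subgroup G}
    (h : ∀ x ∈ centralizer (pCoreOf p K : Set G) ⊓ K, (orderOf x).Coprime p → x = 1) :
    IsCharP p K := by
  have hD : IsPGroup p (centralizer (pCoreOf p K : Set G) ⊓ K : Subgroup G) :=
    isPGroup_of_forall_coprime fun x hx => Subtype.ext (h x x.2 (by rwa [orderOf_coe]))
  rw [isCharP_iff]
  refine le_pCoreOf inf_le_right hD
    ((le_inf ?_ le_normalizer).trans inf_normalizer_le_normalizer_inf)
  exact (le_normalizer_pCoreOf K).trans (normalizer_le_normalizer_centralizer _)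

theorem IsCharP.centralizer_inf {K R : Subgroup G} (hK : IsCharP p K) (hRK : R ≤ K)
    (hR : IsPGroup p R) : IsCharP p (centralizer (R : Set G) ⊓ K : Subgroup G) := by
  set C := centralizer (R : Set G) ⊓ K
  set T := pCoreOf p K
  have hCT : C ≤ normalizer (T : Set G) := inf_le_right.trans (le_normalizer_pCoreOf K)
  have hTC : T ⊓ centralizer (R : Set G) ≤ pCoreOf p C := by
    refine le_pCoreOf (le_inf inf_le_right (inf_le_left.trans (pCoreOf_le K)))
      ((isPGroup_pCoreOf K).to_le inf_le_left) ?_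
    exact (le_inf hCT (inf_le_left.trans le_normalizer)).trans inf_normalizer_le_normalizer_inf
  refine isCharP_of_forall_coprime fun x ⟨hxC', hxC⟩ hxp => hK.eq_one_of_coprime ?_ hxC.2 hxp
  exact mem_centralizer_of_mem_centralizer_inf_centralizer (isPGroup_pCoreOf K) hR
    (hRK.trans (le_normalizer_pCoreOf K)) (hCT hxC) hxC.1 (centralizer_le hTC hxC') hxp

theorem IsCharP.sup {H R : Subgroup G} (hH : IsCharP p H) (hRH : R ≤ normalizer (H : Set G))
    (hR : IsPGroup p R) : IsCharP p (H ⊔ R : Subgroup G) := by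
  have hHR : pCoreOf p H ≤ pCoreOf p (H ⊔ R) :=
    le_pCoreOf ((pCoreOf_le H).trans le_sup_left) (isPGroup_pCoreOf H)
      (sup_le (le_normalizer_pCoreOf H) (hRH.trans (normalizer_le_normalizer_pCoreOf H)))
  exact isCharP_of_forall_coprime fun x hx hxp => hH.eq_one_of_coprime (centralizer_le hHR hx.1)
    (mem_of_mem_sup_of_coprime hR hRH hx.2 hxp) hxp

theorem isCharP_normalizer_of_isCharP_centralizer {R : Subgroup G} (hR : IsPGroup p R)
    (hC : IsCharP p (centralizer (R : Set G))) : IsCharP p (normalizer (R : Set G)) := by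
  have hRN : R ≤ pCoreOf p (normalizer (R : Set G)) := le_pCoreOf le_normalizer hR le_rfl
  have hCN : pCoreOf p (centralizer (R : Set G)) ≤ pCoreOf p (normalizer (R : Set G)) :=
    le_pCoreOf ((pCoreOf_le _).trans (centralizer_le_normalizer _)) (isPGroup_pCoreOf _)
      ((normalizer_le_normalizer_centralizer R).trans (normalizer_le_normalizer_pCoreOf _))
  exact isCharP_of_forall_coprime fun x hx hxp =>
    hC.eq_one_of_coprime (centralizer_le hCN hx.1) (centralizer_le hRN hx.1) hxp

theorem isCharP_centralizer_of_isCharP_normalizer {R : Subgroup G} (hR : IsPGroup p R)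
    (hN : IsCharP p (normalizer (R : Set G))) : IsCharP p (centralizer (R : Set G)) := by
  have := hN.centralizer_inf le_normalizer hR
  rwa [inf_eq_left.mpr (centralizer_le_normalizer _)] at this

theorem isCharP_centralizer_of_le_normalizer {P R : Subgroup G} (hPR : P ≤ R)
    (hRP : R ≤ normalizer (P : Set G)) (hR : IsPGroup p R)
    (hP : IsCharP p (centralizer (P : Set G))) : IsCharP p (centralizer (R : Set G)) := by
  have hRC : R ≤ normalizer (centralizer (P : Set G) : Set G) :=
    hRP.trans (normalizer_le_normalizer_centralizer P)
  have := (hP.sup hRC hR).centralizer_inf le_sup_right hR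
  rwa [inf_eq_left.mpr ((centralizer_le hPR).trans le_sup_left)] at this

theorem isCharP_centralizer_of_le {P R : Subgroup G} (hPR : P ≤ R) (hR : IsPGroup p R)
    (hP : IsCharP p (centralizer (P : Set G))) : IsCharP p (centralizer (R : Set G)) := by
  induction P using WellFoundedGT.induction with
  | _ P ih =>
    obtain rfl | hlt := hPR.eq_or_lt
    · exact hP
    have hP₁ : IsCharP p (centralizer ((normalizer (P : Set G) ⊓ R : Subgroup G) : Set G)) :=
      isCharP_centralizer_of_le_normalizer (le_inf le_normalizer hPR) inf_le_left
        (hR.to_le inf_le_right) hP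
    exact ih _ (lt_normalizer_inf_of_lt hlt hR) inf_le_right hP₁

end CharP

end

/-- Let `G` be finite, `S ∈ Syl_p(G)`, and `P ≤ R ≤ S` with `C_G(P)` of characteristic `p`.
Then `C_G(R)` is of characteristic `p`; consequently the set
`Δ = {P ≤ S : N_G(P) is of characteristic p}` is closed under passing to overgroups in `S`
and under `G`-conjugation. -/
theorem charP_centralizer_closed (p : ℕ) [Fact p.Prime] (G : Type*) [Group G] [Finite G]
    (S : Sylow p G) :
    (∀ P R : Subgroup G, P ≤ R → R ≤ S →
        IsCharP p (Subgroup.centralizer (P : Set G)) →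
        IsCharP p (Subgroup.centralizer (R : Set G))) ∧
      (∀ P R : Subgroup G, P ≤ S → R ≤ S → P ≤ R →
        IsCharP p (Subgroup.normalizer (P : Set G)) → IsCharP p (Subgroup.normalizer (R : Set G))) ∧
      (∀ P : Subgroup G, P ≤ S → IsCharP p (Subgroup.normalizer (P : Set G)) → ∀ g : G,
        Subgroup.map (MulAut.conj g).toMonoidHom P ≤ S →
        IsCharP p (Subgroup.normalizer ((Subgroup.map (MulAut.conj g).toMonoidHom P : Subgroup G) : Set G))) := by
  have hS : IsPGroup p (S : Subgroup G) := S.isPGroup'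
  refine ⟨fun P R hPR hRS hP => isCharP_centralizer_of_le hPR (hS.to_le hRS) hP,
    fun P R hPS hRS hPR hP => ?_, fun P _ hP g _ => ?_⟩
  · have hC := isCharP_centralizer_of_isCharP_normalizer (hS.to_le hPS) hP
    exact isCharP_normalizer_of_isCharP_centralizer (hS.to_le hRS)
      (isCharP_centralizer_of_le hPR (hS.to_le hRS) hC)
  · rw [← Subgroup.map_equiv_normalizer_eq, MulEquiv.toMonoidHom_eq_coe]
    exact hP.of_mulEquiv (MulEquiv.subgroupMap _ _)
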